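/- Main lemma on the explicitly controlled product: let E be an explicitly controlled product of the selection functions ε_s for ω. If α = E s q, then for every n, α = (α|n) * E (s * α|n) (q_{α|n}), i.e. the infinite extension of an initial segment of a previous infinite extension is identical to the original infinite extension. -/
import Mathlib


/-- Prepend a single element to an infinite sequence. -/
def consSeq {X : Type*} (x : X) (α : ℕ → X) : ℕ → X
  | 0 => x
  | n + 1 => α n

/-- The canonical infinite extension `ŝ` of a finite sequence `s` by the distinguished
element `z`. -/
def extSeq {X : Type*} (z : X) (s : List X) : ℕ → X :=
  fun n => s.getD n z

/-- Concatenation `t * α` of a finite sequence `t` with an infinite sequence `α`. -/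
def prependSeq {X : Type*} (t : List X) (α : ℕ → X) : ℕ → X :=
  fun n => t.getD n (α (n - t.length))

/-- The initial segment `α|n` of the infinite sequence `α`, of length `n`. -/
def initSeg {X : Type*} (α : ℕ → X) (n : ℕ) : List X :=
  (List.range n).map α


lemma prependSeq_nil {X : Type*} (β : ℕ → X) : prependSeq ([] : List X) β = β := by
  funext n; simp [prependSeq]

lemma prepend_snoc {X : Type*} (l : List X) (x : X) (γ : ℕ → X) :
    prependSeq (l ++ [x]) γ = prependSeq l (consSeq x γ) := by
  funext n
  simp only [prependSeq]
  rcases lt_trichotomy n l.length with h | h | h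
  · rw [List.getD_eq_getElem _ _ (by simp; omega), List.getD_eq_getElem _ _ h,
      List.getElem_append_left h]
  · subst h
    rw [List.getD_append_right _ _ _ _ le_rfl, List.getD_eq_default _ _ le_rfl]
    simp [consSeq]
  · rw [List.getD_append_right _ _ _ _ (le_of_lt h),
      List.getD_eq_default _ _ (by simp; omega),
      List.getD_eq_default _ _ (by omega)]
    have : n - l.length = n - l.length - 1 + 1 := by omega
    rw [this]; simp only [consSeq, List.length_append, List.length_singleton]
    exact congrArg γ (by omega)

lemma extSeq_snoc {X : Type*} (z : X) (l : List X) :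
    extSeq z (l ++ [z]) = extSeq z l := by
  funext n
  simp only [extSeq]
  rcases lt_or_ge n l.length with h | h
  · rw [List.getD_eq_getElem _ _ (by simp; omega), List.getD_eq_getElem _ _ h,
      List.getElem_append_left h]
  · rw [List.getD_append_right _ _ _ _ h, List.getD_eq_default _ _ h]
    rcases eq_or_lt_of_le h with h' | h'
    · subst h'; simp
    · rw [List.getD_eq_default _ _ (by simp; omega)]

/-- `IsECP z ε ω E` says that `E` is an explicitly controlled product of the selection
functions `ε_s : (X → R) → X` for the control functional `ω`:  `E s q = 0` (the constant
`z` sequence) if `ω ŝ < |s|`, and otherwise `E s q = a * E (s * a) q_a` where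
`a = ε_s (fun x => q_x (E (s * x) q_x))` and `q_x α = q (x * α)`. -/
def IsECP {X R : Type*} (z : X) (ε : List X → (X → R) → X) (ω : (ℕ → X) → ℕ)
    (E : List X → ((ℕ → X) → R) → ℕ → X) : Prop :=
  ∀ (s : List X) (q : (ℕ → X) → R),
    (ω (extSeq z s) < s.length → E s q = fun _ => z) ∧
    (¬ ω (extSeq z s) < s.length →
      E s q =
        (let a := ε s (fun x => q (consSeq x (E (s ++ [x]) (fun α => q (consSeq x α)))));
         consSeq a (E (s ++ [a]) (fun α => q (consSeq a α)))))

/-- Main lemma on the explicitly controlled product: if `α = E s q` then, for every `n`,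
`α = (α|n) * E (s * α|n) q_(α|n)`. -/
theorem ecp_main_lemma {X R : Type*} (z : X) (ε : List X → (X → R) → X)
    (ω : (ℕ → X) → ℕ) (E : List X → ((ℕ → X) → R) → ℕ → X) (hE : IsECP z ε ω E)
    (s : List X) (q : (ℕ → X) → R) (α : ℕ → X) (hα : α = E s q) (n : ℕ) :
    α = prependSeq (initSeg α n)
        (E (s ++ initSeg α n) (fun β => q (prependSeq (initSeg α n) β))) := by
  induction n with
  | zero =>
    simpa [initSeg, prependSeq_nil] using hα
  | succ n ih =>
    set t := initSeg α n with ht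
    have hlen : t.length = n := by simp [ht, initSeg]
    have hsucc : initSeg α (n + 1) = t ++ [α n] := by
      simp [initSeg, List.range_succ, ht]
    have hqsnoc : ∀ x : X, (fun β => q (prependSeq (t ++ [x]) β))
        = (fun β => q (prependSeq t (consSeq x β))) := by
      intro x; funext β; rw [prepend_snoc]
    by_cases hc : ω (extSeq z (s ++ t)) < (s ++ t).length
    · have hz : E (s ++ t) (fun β => q (prependSeq t β)) = fun _ => z :=
        (hE (s ++ t) _).1 hc
      have hαz : α = prependSeq t (fun _ => z) := by rw [ih, hz]
      have hαn : α n = z := by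
        conv_lhs => rw [hαz]
        simp [prependSeq, List.getD, List.getElem?_eq_none hlen.le]
      have hc' : ω (extSeq z (s ++ t ++ [z])) < (s ++ t ++ [z]).length := by
        rw [extSeq_snoc]
        simp only [List.length_append, List.length_singleton] at hc ⊢; omega
      have hz' : E (s ++ t ++ [z]) (fun β => q (prependSeq (t ++ [z]) β)) = fun _ => z :=
        (hE (s ++ t ++ [z]) _).1 hc'
      rw [hsucc, hαn, show s ++ (t ++ [z]) = s ++ t ++ [z] from (List.append_assoc s t [z]).symm,
        hz', prepend_snoc]
      have hcz : consSeq z (fun _ : ℕ => z) = fun _ => z := by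
        funext m; cases m <;> rfl
      rw [hcz]; exact hαz
    · have hrec := (hE (s ++ t) (fun β => q (prependSeq t β))).2 hc
      simp only at hrec
      set a := ε (s ++ t) (fun x => q (prependSeq t (consSeq x
        (E (s ++ t ++ [x]) (fun β => q (prependSeq t (consSeq x β))))))) with ha
      have hαn : α n = a := by
        conv_lhs => rw [ih]
        simp only [prependSeq, List.getD_eq_default _ _ (le_of_eq hlen), hlen,
          Nat.sub_self]
        rw [hrec]
        rfl
      rw [hsucc, hαn, show s ++ (t ++ [a]) = s ++ t ++ [a] from (List.append_assoc s t [a]).symm,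
        hqsnoc a, prepend_snoc, ← hrec]
      exact ih
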